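/- Let L > 0, ν > 0, a ∈ ℝ³ with ‖a‖₂ = 1, and λ ∈ ℂ. If v : ℝ → ℂ³ is twice continuously differentiable on [0, L], not identically zero on [0, L], satisfies v′(0) = v′(L) = 0, and satisfies ν · v″(x) + a × v″(x) = λ · v(x) for all x ∈ [0, L], then the real part of λ is nonpositive: Re λ ≤ 0. -/

import Mathlib

/-!
Write `B q = ν q + a × q`. Pairing `B v″ = λ v` with `v̄` and integrating by parts, the Neumann
conditions kill the boundary term and leave `∫ ⟨v′, B v′⟩ + λ ∫ |v|² = 0`. Since `a` is real,
`⟨q, a × q⟩` is purely imaginary, so `Re ⟨q, B q⟩ = ν |q|² ≥ 0`; taking real parts,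
`Re λ ∫ |v|² ≤ 0` with `∫ |v|² > 0`. The argument works for any real-linear `B` on `ℂⁿ` with
`Re ⟨q, B q⟩ ≥ 0`.
-/

open Matrix Set

open MeasureTheory

open scoped ComplexOrder

theorem re_star_dotProduct_ofReal_cross (a : Fin 3 → ℝ) (q : Fin 3 → ℂ) :
    (star q ⬝ᵥ (fun i => (a i : ℂ)) ⨯₃ q).re = 0 := by
  simp only [dotProduct, Fin.sum_univ_three, cross_apply, Pi.star_apply, Complex.star_def,
    cons_val_zero, cons_val_one, cons_val_two, head_cons, tail_cons, Complex.add_re,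
    Complex.sub_re, Complex.mul_re, Complex.sub_im, Complex.mul_im, Complex.conj_re,
    Complex.conj_im, Complex.ofReal_re, Complex.ofReal_im]
  ring

theorem intervalIntegral_pos_of_continuousOn_of_ne_zero {f : ℝ → ℝ} {a b x₀ : ℝ} (hab : a < b)
    (hf : ContinuousOn f (Icc a b)) (hf₀ : ∀ x ∈ Icc a b, 0 ≤ f x) (hx₀ : x₀ ∈ Icc a b)
    (hfx₀ : f x₀ ≠ 0) : 0 < ∫ x in a..b, f x := by
  -- `x₀` may be an endpoint, so first find an interior point where `f ≠ 0`.
  have : (nhdsWithin x₀ (Ioo a b)).NeBot :=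
    mem_closure_iff_nhdsWithin_neBot.1 (by rwa [closure_Ioo hab.ne])
  obtain ⟨x₁, hx₁, hfx₁⟩ := (eventually_mem_nhdsWithin.and
    (((hf x₀ hx₀).tendsto.eventually_ne hfx₀).filter_mono
      (nhdsWithin_mono _ Ioo_subset_Icc_self))).exists
  have hU : IsOpen (Ioo a b ∩ f ⁻¹' {0}ᶜ) :=
    (hf.mono Ioo_subset_Icc_self).isOpen_inter_preimage isOpen_Ioo isOpen_compl_singleton
  rw [intervalIntegral.integral_pos_iff_support_of_nonneg_ae' ?_
    (hf.intervalIntegrable_of_Icc hab.le)]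
  · exact ⟨hab, (hU.measure_pos _ ⟨x₁, hx₁, hfx₁⟩).trans_le
      (measure_mono fun x hx => ⟨hx.2, Ioo_subset_Ioc_self hx.1⟩)⟩
  · rw [uIoc_of_le hab.le]
    exact ae_restrict_of_forall_mem measurableSet_Ioc
      fun x hx => hf₀ x (Ioc_subset_Icc_self hx)

section

variable {ι : Type*} [Fintype ι]

theorem im_star_dotProduct_self (q : ι → ℂ) : (star q ⬝ᵥ q).im = 0 :=
  (Complex.nonneg_iff.1 (dotProduct_star_self_nonneg q)).2.symm

theorem re_star_dotProduct_self_nonneg (q : ι → ℂ) : 0 ≤ (star q ⬝ᵥ q).re :=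
  (Complex.nonneg_iff.1 (dotProduct_star_self_nonneg q)).1

theorem re_star_dotProduct_self_pos {q : ι → ℂ} (hq : q ≠ 0) : 0 < (star q ⬝ᵥ q).re :=
  (Complex.pos_iff.1 (dotProduct_star_self_pos_iff.2 hq)).1

theorem continuousOn_star_dotProduct {α : Type*} [TopologicalSpace α] {f g : α → ι → ℂ}
    {s : Set α} (hf : ContinuousOn f s) (hg : ContinuousOn g s) :
    ContinuousOn (fun x => star (f x) ⬝ᵥ g x) s := by
  simp only [dotProduct]
  fun_prop

theorem HasDerivWithinAt.star_dotProduct {u w : ℝ → ι → ℂ} {u' w' : ι → ℂ} {s : Set ℝ} {x : ℝ}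
    (hu : HasDerivWithinAt u u' s x) (hw : HasDerivWithinAt w w' s x) :
    HasDerivWithinAt (fun y => star (u y) ⬝ᵥ w y) (star u' ⬝ᵥ w x + star (u x) ⬝ᵥ w') s x := by
  simp only [dotProduct, ← Finset.sum_add_distrib]
  exact HasDerivWithinAt.fun_sum fun i _ =>
    ((hasDerivWithinAt_pi.1 hu i).star.mul (hasDerivWithinAt_pi.1 hw i))

theorem integral_star_dotProduct_neumann_eq_zero (B : (ι → ℂ) →L[ℝ] (ι → ℂ)) {a b : ℝ}
    (hab : a ≤ b) {v v' v'' : ℝ → ι → ℂ}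
    (hv : ∀ x ∈ Icc a b, HasDerivWithinAt v (v' x) (Icc a b) x)
    (hv' : ∀ x ∈ Icc a b, HasDerivWithinAt v' (v'' x) (Icc a b) x)
    (hint : IntervalIntegrable (fun x => star (v' x) ⬝ᵥ B (v' x) + star (v x) ⬝ᵥ B (v'' x))
      volume a b)
    (ha : v' a = 0) (hb : v' b = 0) :
    ∫ x in a..b, (star (v' x) ⬝ᵥ B (v' x) + star (v x) ⬝ᵥ B (v'' x)) = 0 := by
  have hG : ∀ x ∈ Icc a b, HasDerivWithinAt (fun y => star (v y) ⬝ᵥ B (v' y))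
      (star (v' x) ⬝ᵥ B (v' x) + star (v x) ⬝ᵥ B (v'' x)) (Icc a b) x := fun x hx =>
    (hv x hx).star_dotProduct (B.hasFDerivAt.comp_hasDerivWithinAt x (hv' x hx))
  rw [intervalIntegral.integral_eq_sub_of_hasDeriv_right_of_le hab
    (fun x hx => (hG x hx).continuousWithinAt)
    (fun x hx => ((hG x (Ioo_subset_Icc_self hx)).hasDerivAt
      (Icc_mem_nhds hx.1 hx.2)).hasDerivWithinAt) hint]
  simp [ha, hb]

theorem re_le_zero_of_neumann_eigenvalue (B : (ι → ℂ) →L[ℝ] (ι → ℂ))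
    (hB : ∀ q, 0 ≤ (star q ⬝ᵥ B q).re) {L : ℝ} (hL : 0 < L)
    {lam : ℂ} {v v' v'' : ℝ → ι → ℂ}
    (hv : ∀ x ∈ Icc 0 L, HasDerivWithinAt v (v' x) (Icc 0 L) x)
    (hv' : ∀ x ∈ Icc 0 L, HasDerivWithinAt v' (v'' x) (Icc 0 L) x)
    (hv'' : ContinuousOn v'' (Icc 0 L)) (hne : ¬ ∀ x ∈ Icc 0 L, v x = 0)
    (hb0 : v' 0 = 0) (hbL : v' L = 0) (heq : ∀ x ∈ Icc 0 L, B (v'' x) = lam • v x) :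
    lam.re ≤ 0 := by
  by_contra! hlam
  obtain ⟨x₀, hx₀, hvx₀⟩ := not_forall₂.1 hne
  set G' := fun x => star (v' x) ⬝ᵥ B (v' x) + star (v x) ⬝ᵥ B (v'' x)
  have hG'c : ContinuousOn G' (Icc 0 L) := by
    have hvc : ContinuousOn v (Icc 0 L) := fun x hx => (hv x hx).continuousWithinAt
    have hv'c : ContinuousOn v' (Icc 0 L) := fun x hx => (hv' x hx).continuousWithinAt
    exact (continuousOn_star_dotProduct hv'c (B.continuous.comp_continuousOn hv'c)).add
      (continuousOn_star_dotProduct hvc (B.continuous.comp_continuousOn hv''))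
  have hint := hG'c.intervalIntegrable_of_Icc (μ := volume) hL.le
  have hG're : ∀ x ∈ Icc 0 L,
      (G' x).re = (star (v' x) ⬝ᵥ B (v' x)).re + lam.re * (star (v x) ⬝ᵥ v x).re := by
    intro x hx
    simp [G', heq x hx, dotProduct_smul, im_star_dotProduct_self]
  have hpos : 0 < ∫ x in (0 : ℝ)..L, (G' x).re := by
    refine intervalIntegral_pos_of_continuousOn_of_ne_zero hL
      (Complex.continuous_re.comp_continuousOn hG'c) (fun x hx => ?_) hx₀ ?_
    · rw [hG're x hx]
      exact add_nonneg (hB _) (mul_nonneg hlam.le (re_star_dotProduct_self_nonneg _))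
    · rw [hG're x₀ hx₀]
      exact (add_pos_of_nonneg_of_pos (hB _)
        (mul_pos hlam (re_star_dotProduct_self_pos hvx₀))).ne'
  have hzero : ∫ x in (0 : ℝ)..L, G' x = 0 :=
    integral_star_dotProduct_neumann_eq_zero B hL.le hv hv' hint hb0 hbL
  have hre : ∫ x in (0 : ℝ)..L, (G' x).re = (∫ x in (0 : ℝ)..L, G' x).re :=
    intervalIntegral.intervalIntegral_re hint
  rw [hre, hzero, Complex.zero_re] at hpos
  exact lt_irrefl 0 hpos

end

theorem linearized_landau_lifshitz_eigenvalues_re_nonpos_general (L ν : ℝ) (hL : 0 < L) (hν : 0 < ν)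
    (a : Fin 3 → ℝ) (lam : ℂ)
    (v v' v'' : ℝ → Fin 3 → ℂ)
    (hv : ∀ x ∈ Icc (0 : ℝ) L, HasDerivWithinAt v (v' x) (Icc (0 : ℝ) L) x)
    (hv' : ∀ x ∈ Icc (0 : ℝ) L, HasDerivWithinAt v' (v'' x) (Icc (0 : ℝ) L) x)
    (hv'' : ContinuousOn v'' (Icc (0 : ℝ) L))
    (hne : ¬ ∀ x ∈ Icc (0 : ℝ) L, v x = 0)
    (hb0 : v' 0 = 0) (hbL : v' L = 0)
    (heq : ∀ x ∈ Icc (0 : ℝ) L,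
      (ν : ℂ) • v'' x + (fun i => (a i : ℂ)) ⨯₃ (v'' x) = lam • v x) :
    lam.re ≤ 0 := by
  let B : (Fin 3 → ℂ) →L[ℝ] (Fin 3 → ℂ) := LinearMap.toContinuousLinearMap
    (((ν : ℂ) • LinearMap.id + crossProduct fun i => (a i : ℂ)).restrictScalars ℝ)
  have hB : ∀ q, 0 ≤ (star q ⬝ᵥ B q).re := fun q => by
    change 0 ≤ (star q ⬝ᵥ ((ν : ℂ) • q + (fun i => (a i : ℂ)) ⨯₃ q)).re
    rw [dotProduct_add, Complex.add_re, re_star_dotProduct_ofReal_cross, dotProduct_smul,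
      smul_eq_mul, Complex.re_ofReal_mul, add_zero]
    exact mul_nonneg hν.le (re_star_dotProduct_self_nonneg q)
  exact re_le_zero_of_neumann_eigenvalue B hB hL hv hv' hv'' hne hb0 hbL heq

/-- Every eigenvalue of the linearized Landau–Lifshitz operator
`A v = ν v″ + a × v″` on `[0, L]` with Neumann boundary conditions has
nonpositive real part. -/
theorem linearized_landau_lifshitz_eigenvalues_re_nonpos (L ν : ℝ) (hL : 0 < L) (hν : 0 < ν)
    (a : Fin 3 → ℝ) (ha : Real.sqrt (∑ i, a i ^ 2) = 1) (lam : ℂ)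
    (v v' v'' : ℝ → Fin 3 → ℂ)
    (hv : ∀ x ∈ Icc (0 : ℝ) L, HasDerivWithinAt v (v' x) (Icc (0 : ℝ) L) x)
    (hv' : ∀ x ∈ Icc (0 : ℝ) L, HasDerivWithinAt v' (v'' x) (Icc (0 : ℝ) L) x)
    (hv'' : ContinuousOn v'' (Icc (0 : ℝ) L))
    (hne : ¬ ∀ x ∈ Icc (0 : ℝ) L, v x = 0)
    (hb0 : v' 0 = 0) (hbL : v' L = 0)
    (heq : ∀ x ∈ Icc (0 : ℝ) L,
      (ν : ℂ) • v'' x + (fun i => (a i : ℂ)) ⨯₃ (v'' x) = lam • v x) :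
    lam.re ≤ 0 :=
  linearized_landau_lifshitz_eigenvalues_re_nonpos_general L ν hL hν a lam v v' v'' hv hv' hv'' hne
    hb0 hbL heq
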